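/- arXiv:0705.1182 — 3 statements merged into one kernel-verified Lean document; each statement's English description precedes it below -/
import Mathlib

section
/- Let H be a Hilbert space decomposed as an orthogonal direct sum H = H₀ ⊕ H₁, let u be a unitary on H with uⁿ H₁ ⊆ H₀ for all nonzero integers n, and let s be a bounded operator with s H₀ ⊆ H₁ and ‖s‖ ≤ 1. Then ‖(1/k) ∑_{n=1}^k uⁿ s u⁻ⁿ‖ ≤ 2/√k for every k ≥ 1. -/
/-!
Let `P`, `Q` be the orthogonal projections onto `H₀` and `H₁ = H₀ᗮ`. Since `P s P = 0`, we have
`s = Q (s P) + s Q`, so the average splits as `∑ uⁿ Q (s P) u⁻ⁿ + (∑ uⁿ Q s* u⁻ⁿ)*`. Each of these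
is a sum of `k` contractions whose ranges lie in the subspaces `uⁿ H₁`, which are mutually
orthogonal because `uᵐ⁻ⁿ H₁ ⊆ H₀`. By Pythagoras each sum has norm at most `√k`.
-/

open scoped InnerProductSpace Function
open Finset

section

variable {𝕜 E : Type*} [RCLike 𝕜] [NormedAddCommGroup E] [InnerProductSpace 𝕜 E]
  {K : Submodule 𝕜 E}

theorem norm_sum_le_sqrt_card_of_pairwise_isOrtho {ι : Type*} {V : ι → Submodule 𝕜 E}
    (hV : Pairwise ((· ⟂ ·) on V)) (T : ι → E →L[𝕜] E) (hT : ∀ i, ‖T i‖ ≤ 1)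
    (hTV : ∀ i x, T i x ∈ V i) (F : Finset ι) :
    ‖∑ i ∈ F, T i‖ ≤ √(#F) := by
  refine ContinuousLinearMap.opNorm_le_bound _ (Real.sqrt_nonneg _) fun x => ?_
  have pythagoras : ‖∑ i ∈ F, T i x‖ ^ 2 = ∑ i ∈ F, ‖T i x‖ ^ 2 := by
    simpa using (orthogonalFamily_iff_pairwise.mpr hV).norm_sum (fun i => ⟨T i x, hTV i x⟩) F
  have hsq : ‖∑ i ∈ F, T i x‖ ^ 2 ≤ (√(#F) * ‖x‖) ^ 2 :=
    calc ‖∑ i ∈ F, T i x‖ ^ 2 = ∑ i ∈ F, ‖T i x‖ ^ 2 := pythagoras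
      _ ≤ ∑ i ∈ F, ‖x‖ ^ 2 := by
        gcongr with i
        simpa using (T i).le_of_opNorm_le (hT i) x
      _ = (√(#F) * ‖x‖) ^ 2 := by simp [mul_pow]
  simpa [_root_.sum_apply] using
    (pow_le_pow_iff_left₀ (norm_nonneg _) (by positivity) two_ne_zero).mp hsq

theorem eq_starProjection_orthogonal_mul_add_mul_starProjection_orthogonal
    [K.HasOrthogonalProjection] {s : E →L[𝕜] E} (hs : ∀ v ∈ K, s v ∈ Kᗮ) :
    s = Kᗮ.starProjection * (s * K.starProjection) + s * Kᗮ.starProjection := by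
  ext x
  simp only [add_apply, mul_apply_eq_comp]
  rw [Kᗮ.starProjection_eq_self_iff.mpr (hs _ (K.starProjection_apply_mem x)), ← map_add,
    K.starProjection_add_starProjection_orthogonal]

variable [CompleteSpace E]

theorem conj_eq_conj_starProjection_orthogonal_add_star_conj [K.HasOrthogonalProjection]
    {s : E →L[𝕜] E} (hs : ∀ v ∈ K, s v ∈ Kᗮ) (w : E →L[𝕜] E) :
    w * s * star w = w * (Kᗮ.starProjection * (s * K.starProjection)) * star w +
      star (w * (Kᗮ.starProjection * star s) * star w) := by
  simp only [star_mul, star_star, (isSelfAdjoint_starProjection Kᗮ).star_eq, ← mul_assoc]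
  nth_rw 1 [eq_starProjection_orthogonal_mul_add_mul_starProjection_orthogonal hs]
  noncomm_ring

theorem pairwise_isOrtho_map_zpow_orthogonal (u : unitary (E →L[𝕜] E))
    (hu : ∀ n : ℤ, n ≠ 0 → ∀ v ∈ Kᗮ, (↑(u ^ n) : E →L[𝕜] E) v ∈ K) :
    Pairwise ((· ⟂ ·) on fun n : ℤ => Kᗮ.map ((↑(u ^ n) : E →L[𝕜] E) : E →ₗ[𝕜] E)) := by
  intro n m hnm
  rw [Function.onFun, Submodule.isOrtho_iff_inner_eq]
  rintro - ⟨a, ha, rfl⟩ - ⟨b, hb, rfl⟩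
  have hpow : (↑(u ^ m) : E →L[𝕜] E) = ↑(u ^ n) * ↑(u ^ (m - n)) := by
    rw [← Submonoid.coe_mul, ← zpow_add, add_sub_cancel]
  rw [ContinuousLinearMap.coe_coe, ContinuousLinearMap.coe_coe, hpow, mul_apply_eq_comp,
    Unitary.inner_map_map]
  exact Submodule.inner_left_of_mem_orthogonal (hu _ (sub_ne_zero.mpr hnm.symm) b hb) ha

theorem norm_sum_conj_starProjection_orthogonal_mul_le [K.HasOrthogonalProjection]
    (u : unitary (E →L[𝕜] E)) (hu : ∀ n : ℤ, n ≠ 0 → ∀ v ∈ Kᗮ, (↑(u ^ n) : E →L[𝕜] E) v ∈ K)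
    (r : E →L[𝕜] E) (hr : ‖r‖ ≤ 1) (F : Finset ℕ) :
    ‖∑ n ∈ F, (↑(u ^ (n : ℤ)) : E →L[𝕜] E) * (Kᗮ.starProjection * r) *
        star (↑(u ^ (n : ℤ)) : E →L[𝕜] E)‖ ≤ √(#F) := by
  refine norm_sum_le_sqrt_card_of_pairwise_isOrtho
    ((pairwise_isOrtho_map_zpow_orthogonal u hu).comp_of_injective Nat.cast_injective) _
    (fun n => ?_) (fun n x => ?_) F
  · rw [← Unitary.coe_star, CStarRing.norm_mul_coe_unitary, CStarRing.norm_coe_unitary_mul]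
    exact (ContinuousLinearMap.opNorm_comp_le _ _).trans
      (mul_le_one₀ Kᗮ.starProjection_norm_le (norm_nonneg _) hr)
  · exact Submodule.mem_map_of_mem (Kᗮ.starProjection_apply_mem _)

end

/-- Choi's averaging lemma: if `u` is a unitary on `H = H₀ ⊕ H₁` (orthogonally) with
`uⁿ H₁ ⊆ H₀` for all nonzero integers `n`, and `s` is a contraction with `s H₀ ⊆ H₁`,
then `‖(1/k) ∑_{n=1}^k uⁿ s u⁻ⁿ‖ ≤ 2/√k`. -/
theorem choi_averaging_lemma
    {H : Type*} [NormedAddCommGroup H] [InnerProductSpace ℂ H] [CompleteSpace H]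
    (H₀ : Submodule ℂ H) (hH₀ : IsClosed (H₀ : Set H))
    (u : unitary (H →L[ℂ] H))
    (hu : ∀ n : ℤ, n ≠ 0 → ∀ v ∈ H₀ᗮ, (↑(u ^ n) : H →L[ℂ] H) v ∈ H₀)
    (s : H →L[ℂ] H) (hs : ‖s‖ ≤ 1) (hsH : ∀ v ∈ H₀, s v ∈ H₀ᗮ) :
    ∀ k : ℕ, 1 ≤ k →
      ‖(k : ℝ)⁻¹ • ∑ n ∈ Finset.Icc 1 k,
          (↑(u ^ (n : ℤ)) : H →L[ℂ] H) * s * (↑(u ^ (n : ℤ))⁻¹ : H →L[ℂ] H)‖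
        ≤ 2 / Real.sqrt k := by
  intro k hk
  have : CompleteSpace H₀ := hH₀.completeSpace_coe
  have hsP : ‖s * H₀.starProjection‖ ≤ 1 := (ContinuousLinearMap.opNorm_comp_le _ _).trans
    (mul_le_one₀ hs (norm_nonneg _) H₀.starProjection_norm_le)
  have hcard : √(#(Icc 1 k) : ℝ) = √k := by simp
  have hsum : ‖∑ n ∈ Icc 1 k,
      (↑(u ^ (n : ℤ)) : H →L[ℂ] H) * s * (↑(u ^ (n : ℤ))⁻¹ : H →L[ℂ] H)‖ ≤ 2 * √k := by
    simp only [← Unitary.star_eq_inv, Unitary.coe_star,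
      conj_eq_conj_starProjection_orthogonal_add_star_conj hsH, sum_add_distrib, ← star_sum]
    refine (norm_add_le _ _).trans ?_
    rw [norm_star, two_mul, ← hcard]
    exact add_le_add (norm_sum_conj_starProjection_orthogonal_mul_le u hu _ hsP _)
      (norm_sum_conj_starProjection_orthogonal_mul_le u hu _ ((norm_star s).trans_le hs) _)
  have hk0 : (0 : ℝ) < k := by exact_mod_cast hk
  calc _ = (k : ℝ)⁻¹ * ‖∑ n ∈ Icc 1 k,
        (↑(u ^ (n : ℤ)) : H →L[ℂ] H) * s * (↑(u ^ (n : ℤ))⁻¹ : H →L[ℂ] H)‖ := by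
        rw [norm_smul, Real.norm_of_nonneg (by positivity)]
    _ ≤ (k : ℝ)⁻¹ * (2 * √k) := by gcongr
    _ = 2 / √k := by
        field_simp
        rw [Real.sq_sqrt hk0.le]
end

section
/- Let A be a unital C*-algebra and g a state on A. Suppose u ∈ A is unitary with g(u) = 1, and s ∈ A satisfies lim_{k→∞} ‖(1/k) ∑_{n=1}^k uⁿ s u⁻ⁿ‖ = 0. Then g(s) = 0. -/
/-
Regarded as a positive functional, `g` gives the GNS semi-inner product `⟪a, b⟫ = g (a⋆ b)`.
There `1 - u` is a null vector, since `g ((1 - u)⋆ (1 - u)) = 2 - g u - conj (g u) = 0`, so by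
Cauchy–Schwarz `g (b u) = g b` for all `b`; the same holds for `u⋆`, and with `g (x⋆) = conj (g x)`
this makes `g` invariant under conjugation by every power of `u`. Hence `g` takes the value `g s`
on each average of the conjugates of `s`, and `‖g x‖ ≤ ‖x‖` forces `g s = 0`.
-/

open scoped ComplexOrder
noncomputable section

variable {A : Type*} [NormedRing A] [StarRing A] [CStarRing A] [NormedAlgebra ℂ A]
  [CompleteSpace A] [StarModule ℂ A]

/-- A state on a unital C*-algebra: a positive linear functional sending 1 to 1. -/
def IsState {A : Type*} [Ring A] [StarRing A] [Algebra ℂ A] (g : A →ₗ[ℂ] ℂ) : Prop :=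
  g 1 = 1 ∧ ∀ a : A, 0 ≤ g (star a * a)

/-- A pure state: a state that is an extreme point of the state space. -/
def IsPureState {A : Type*} [Ring A] [StarRing A] [Algebra ℂ A] (g : A →ₗ[ℂ] ℂ) : Prop :=
  IsState g ∧ ∀ g₁ g₂ : A →ₗ[ℂ] ℂ, IsState g₁ → IsState g₂ →
    g = (2:ℂ)⁻¹ • g₁ + (2:ℂ)⁻¹ • g₂ → g₁ = g₂

open Filter Topology

lemma map_nonneg_of_map_star_mul_self_nonneg {B : Type*} [NonUnitalRing B] [StarRing B]
    [PartialOrder B] [StarOrderedRing B] [Module ℂ B] (g : B →ₗ[ℂ] ℂ)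
    (hg : ∀ a, 0 ≤ g (star a * a)) {a : B} (ha : 0 ≤ a) : 0 ≤ g a := by
  rw [StarOrderedRing.nonneg_iff] at ha
  induction ha using AddSubmonoid.closure_induction with
  | mem _ hx => obtain ⟨b, rfl⟩ := hx; exact hg b
  | zero => simp
  | add _ _ _ _ hx hy => rw [map_add]; exact add_nonneg hx hy

namespace PositiveLinearMap

variable {B : Type*} [CStarAlgebra B] [PartialOrder B] [StarOrderedRing B] (f : B →ₚ[ℂ] ℂ)

lemma norm_apply_star_mul_sq_le (a b : B) :
    ‖f (star a * b)‖ ^ 2 ≤ ‖f (star a * a)‖ * ‖f (star b * b)‖ := by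
  have hcs := norm_inner_le_norm (𝕜 := ℂ) (f.toPreGNS a) (f.toPreGNS b)
  have hnorm (x : B) : ‖f (star x * x)‖ = ‖f.toPreGNS x‖ ^ 2 := by
    simpa using congrArg norm (f.preGNS_norm_sq (f.toPreGNS x)).symm
  rw [preGNS_inner_def] at hcs
  calc ‖f (star a * b)‖ ^ 2 ≤ (‖f.toPreGNS a‖ * ‖f.toPreGNS b‖) ^ 2 := by gcongr; exact hcs
    _ = _ := by rw [hnorm, hnorm]; ring

lemma norm_apply_le (a : B) : ‖f a‖ ≤ ‖f 1‖ * ‖a‖ := by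
  have hcs := f.norm_apply_star_mul_sq_le 1 a
  have hle := f.norm_apply_le_of_nonneg _ (star_mul_self_nonneg a)
  rw [CStarRing.norm_star_mul_self] at hle
  simp only [star_one, one_mul] at hcs
  refine le_of_sq_le_sq ?_ (by positivity)
  calc ‖f a‖ ^ 2 ≤ ‖f 1‖ * (‖f 1‖ * (‖a‖ * ‖a‖)) := hcs.trans (by gcongr)
    _ = _ := by ring

variable {f} {u : unitary B}

lemma apply_star_unitary (hu : f u = f 1) : f (star (u : B)) = f 1 := by
  rw [map_star, hu, ← map_star, star_one]

lemma apply_mul_unitary (hu : f u = f 1) (b : B) : f (b * u) = f b := by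
  have hnull : f (star (1 - (u : B)) * (1 - u)) = 0 := by
    rw [star_sub, star_one, sub_mul, mul_sub, mul_sub, one_mul, mul_one, one_mul,
      Unitary.coe_star_mul_self]
    simp only [map_sub, hu, apply_star_unitary hu]
    ring
  have hcs := f.norm_apply_star_mul_sq_le (star b) (1 - u)
  rw [hnull, norm_zero, mul_zero, star_star] at hcs
  have : f (b * (1 - u)) = 0 := by simpa using hcs
  rwa [mul_sub, mul_one, map_sub, sub_eq_zero, eq_comm] at this

lemma apply_unitary_mul_mul_star (hu : f u = f 1) (x : B) : f (u * x * star (u : B)) = f x := by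
  have hu' : f ↑(star u) = f 1 := apply_star_unitary hu
  rw [← Unitary.coe_star, apply_mul_unitary hu', ← star_star (f _), ← map_star, star_mul,
    ← Unitary.coe_star, apply_mul_unitary hu', map_star, star_star]

lemma apply_zpow_unitary (hu : f u = f 1) (n : ℤ) : f ↑(u ^ n) = f 1 := by
  induction n using Int.induction_on with
  | zero => simp
  | succ n ih => rw [zpow_add_one, Submonoid.coe_mul, apply_mul_unitary hu, ih]
  | pred n ih =>
    have hu' : f ↑(star u) = f 1 := apply_star_unitary hu
    rw [zpow_sub_one, Submonoid.coe_mul, ← Unitary.star_eq_inv, apply_mul_unitary hu', ih]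

lemma apply_average_zpow_conj (hu : f u = f 1) (s : B) {k : ℕ} (hk : k ≠ 0) :
    f ((k : ℂ)⁻¹ • ∑ n ∈ Finset.Icc 1 k, (↑(u ^ (n : ℤ)) : B) * s * (↑(u ^ (n : ℤ))⁻¹ : B))
      = f s := by
  have hconj (n : ℕ) : f ((↑(u ^ (n : ℤ)) : B) * s * (↑(u ^ (n : ℤ))⁻¹ : B)) = f s := by
    rw [← Unitary.star_eq_inv, Unitary.coe_star,
      apply_unitary_mul_mul_star (apply_zpow_unitary hu n)]
  simp only [map_smul, map_sum, hconj, Finset.sum_const, Nat.card_Icc, add_tsub_cancel_right,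
    nsmul_eq_mul, smul_eq_mul]
  field_simp

theorem apply_eq_zero_of_tendsto_norm_average (hu : f u = f 1) {s : B}
    (hs : Tendsto (fun k : ℕ => ‖(k : ℂ)⁻¹ • ∑ n ∈ Finset.Icc 1 k,
      (↑(u ^ (n : ℤ)) : B) * s * (↑(u ^ (n : ℤ))⁻¹ : B)‖) atTop (𝓝 0)) :
    f s = 0 := by
  have hbound : ∀ᶠ k : ℕ in atTop, ‖f s‖ ≤ ‖f 1‖ * ‖(k : ℂ)⁻¹ • ∑ n ∈ Finset.Icc 1 k,
      (↑(u ^ (n : ℤ)) : B) * s * (↑(u ^ (n : ℤ))⁻¹ : B)‖ := by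
    filter_upwards [eventually_ne_atTop 0] with k hk
    rw [← apply_average_zpow_conj hu s hk]
    exact f.norm_apply_le _
  have hlim := hs.const_mul ‖f 1‖
  rw [mul_zero] at hlim
  exact norm_le_zero_iff.mp (ge_of_tendsto hlim hbound)

end PositiveLinearMap

theorem state_vanishes_of_average_norm_tendsto_zero
    (g : A →ₗ[ℂ] ℂ) (hg : IsState g) (u : unitary A) (hgu : g u = 1) (s : A)
    (hs : Filter.Tendsto
      (fun k : ℕ => ‖(k : ℂ)⁻¹ • ∑ n ∈ Finset.Icc 1 k,
          (↑(u ^ (n : ℤ)) : A) * s * (↑(u ^ (n : ℤ))⁻¹ : A)‖)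
      Filter.atTop (nhds 0)) :
    g s = 0 := by
  let _ : CStarAlgebra A := { ‹NormedRing A›, ‹StarRing A›, ‹CStarRing A›, ‹NormedAlgebra ℂ A›,
    ‹CompleteSpace A›, ‹StarModule ℂ A› with }
  -- `A` carries no order of its own: positivity is taken in the spectral order.
  let _ := CStarAlgebra.spectralOrder A
  have _ := CStarAlgebra.spectralOrderedRing A
  let f : A →ₚ[ℂ] ℂ := .mk₀ g fun _ ↦ map_nonneg_of_map_star_mul_self_nonneg g hg.2
  exact f.apply_eq_zero_of_tendsto_norm_average (hgu.trans hg.1.symm) hs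
end
end

section
/- Let A be a unital C*-algebra, B ⊆ C ⊆ A unital C*-subalgebras, and f a state on A. If f restricted to B has f as its unique state extension to A, then f restricted to C is a pure state of C whenever f restricted to B is pure on B. -/
/-!
Let `f|_C = 2⁻¹ • g₁ + 2⁻¹ • g₂` with states `g₁, g₂` of `C`. Restricting to `B`, purity of `f|_B`
forces `g₁|_B = f|_B`. As `g₁ ≤ 2 f|_C` on squares, Cauchy–Schwarz gives `‖g₁ c‖ ≤ √2 ‖c‖` (not
automatic, since `C` need not be closed). Hence `g₁` extends to a state of `A`: extend it
continuously by Hahn–Banach; the extension is positive on the closure of `C`, which contains the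
square roots of its positive elements; M. Riesz's extension theorem then gives a positive extension
to all of `A`. That state agrees with `f` on `B`, hence is `f`, so `g₁ = f|_C`; likewise `g₂ = f|_C`.
-/
open scoped ComplexOrder
noncomputable section

variable {A : Type*} [NormedRing A] [StarRing A] [CStarRing A] [NormedAlgebra ℂ A]
  [CompleteSpace A] [StarModule ℂ A]

/-- The inclusion of a star subalgebra as a linear map. -/
def inclL (B : StarSubalgebra ℂ A) : B →ₗ[ℂ] A where
  toFun := (↑)
  map_add' _ _ := rfl
  map_smul' _ _ := rfl

open scoped ComplexStarModule ComplexConjugate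
open Complex

section StarAlgebra

variable {R : Type*} [Ring R] [StarRing R] [Algebra ℂ R]

lemma IsState.comp_starAlgHom {S : Type*} [Ring S] [StarRing S] [Algebra ℂ S] {g : R →ₗ[ℂ] ℂ}
    (hg : IsState g) (φ : S →⋆ₐ[ℂ] R) : IsState (g.comp φ.toLinearMap) :=
  ⟨by simpa using hg.1, fun a => by
    have h := hg.2 (φ a)
    rwa [← StarHomClass.map_star, ← map_mul] at h⟩

lemma IsPureState.eq_of_eq_midpoint {g g₁ g₂ : R →ₗ[ℂ] ℂ} (hg : IsPureState g)
    (hg₁ : IsState g₁) (hg₂ : IsState g₂) (hmid : g = (2:ℂ)⁻¹ • g₁ + (2:ℂ)⁻¹ • g₂) : g₁ = g := by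
  obtain rfl := hg.2 g₁ g₂ hg₁ hg₂ hmid
  rw [hmid, ← add_smul]
  norm_num

lemma apply_nonneg_of_nonneg [PartialOrder R] [StarOrderedRing R] {g : R →ₗ[ℂ] ℂ}
    (hg : ∀ a, 0 ≤ g (star a * a)) {x : R} (hx : 0 ≤ x) : 0 ≤ g x := by
  rw [StarOrderedRing.nonneg_iff] at hx
  induction hx using AddSubmonoid.closure_induction with
  | mem y hy => obtain ⟨s, rfl⟩ := hy; exact hg s
  | zero => simp
  | add y z _ _ hy hz => rw [map_add]; exact add_nonneg hy hz

variable [StarModule ℂ R]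

lemma apply_star_add_smul_one_mul (g : R →ₗ[ℂ] ℂ) (a : R) (c : ℂ) :
    g (star (a + c • 1) * (a + c • 1)) =
      g (star a * a) + c * g (star a) + conj c * g a + c * conj c * g 1 := by
  simp only [star_add, star_smul, star_one, Complex.star_def, add_mul, mul_add, smul_mul_assoc,
    mul_smul_comm, one_mul, mul_one, map_add, map_smul, smul_eq_mul]
  ring

lemma map_star_of_nonneg {g : R →ₗ[ℂ] ℂ} (hg : ∀ a, 0 ≤ g (star a * a)) (a : R) :
    g (star a) = conj (g a) := by
  have him (b : R) : (g (star b * b)).im = 0 := (nonneg_iff.mp (hg b)).2.symm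
  have h1 := him (a + (1 : ℂ) • 1)
  have hI := him (a + I • 1)
  rw [apply_star_add_smul_one_mul] at h1 hI
  have h0 := him a
  have hone : (g 1).im = 0 := by simpa using him 1
  simp only [map_one, one_mul, mul_one, add_im, conj_I, neg_mul, mul_neg, I_mul_I, neg_neg, mul_im,
    I_re, I_im, zero_mul, zero_add, neg_im] at h1 hI
  apply Complex.ext <;> simp only [conj_re, conj_im] <;> linarith

lemma IsState.map_star {g : R →ₗ[ℂ] ℂ} (hg : IsState g) (a : R) : g (star a) = conj (g a) :=
  map_star_of_nonneg hg.2 a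

lemma IsState.norm_sq_apply_le {g : R →ₗ[ℂ] ℂ} (hg : IsState g) (a : R) :
    ‖g a‖ ^ 2 ≤ (g (star a * a)).re := by
  have h := hg.2 (a + (-g a) • 1)
  rw [apply_star_add_smul_one_mul, hg.map_star, hg.1] at h
  have := (nonneg_iff.mp h).1
  simp only [map_neg, mul_one, neg_mul, mul_neg, neg_neg, add_re, neg_re, mul_re, conj_re,
    conj_im] at this
  rw [← normSq_eq_norm_sq, normSq_apply]
  linarith

lemma StarSubalgebra.realPart_mem (D : StarSubalgebra ℂ R) {x : R} (hx : x ∈ D) :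
    (ℜ x : R) ∈ D := by
  rw [realPart_apply_coe, ← Complex.coe_smul]
  exact D.smul_mem (add_mem hx (star_mem hx)) _

end StarAlgebra

lemma eq_of_re_apply_eq {E : Type*} [AddCommGroup E] [Module ℂ E] {p : Submodule ℂ E}
    {F h : E →ₗ[ℂ] ℂ} (hre : ∀ x ∈ p, (h x).re = (F x).re) {x : E} (hx : x ∈ p) : h x = F x := by
  refine Complex.ext (hre x hx) ?_
  simpa using hre (-I • x) (p.smul_mem _ hx)

section CStarAlgebra

variable {A : Type*} [CStarAlgebra A]

lemma IsState.re_apply_star_mul_self_le {f : A →ₗ[ℂ] ℂ} (hf : IsState f) (a : A) :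
    (f (star a * a)).re ≤ ‖a‖ ^ 2 := by
  let _ := CStarAlgebra.spectralOrder A
  have _ := CStarAlgebra.spectralOrderedRing A
  let φ := PositiveLinearMap.mk₀ f fun _ => apply_nonneg_of_nonneg hf.2
  calc (f (star a * a)).re ≤ ‖f (star a * a)‖ := re_le_norm _
    _ ≤ ‖f 1‖ * ‖star a * a‖ := φ.norm_apply_le_of_nonneg _ (star_mul_self_nonneg a)
    _ = ‖a‖ ^ 2 := by rw [hf.1, norm_one, one_mul, CStarRing.norm_star_mul_self, sq]

lemma IsState.norm_apply_le_of_re_le {C : StarSubalgebra ℂ A} {g : C →ₗ[ℂ] ℂ} (hg : IsState g)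
    {f : A →ₗ[ℂ] ℂ} (hf : IsState f) {K : ℝ} (hK₀ : 0 ≤ K)
    (hK : ∀ c : C, (g (star c * c)).re ≤ K * (f (star (c : A) * c)).re) (c : C) :
    ‖g c‖ ≤ √K * ‖(c : A)‖ := by
  rw [← Real.sqrt_sq (norm_nonneg (c : A)), ← Real.sqrt_mul' _ (sq_nonneg _),
    Real.le_sqrt (norm_nonneg _) (by positivity)]
  calc ‖g c‖ ^ 2 ≤ (g (star c * c)).re := hg.norm_sq_apply_le c
    _ ≤ K * (f (star (c : A) * c)).re := hK c
    _ ≤ K * ‖(c : A)‖ ^ 2 := by gcongr; exact hf.re_apply_star_mul_self_le _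

section Order

variable [PartialOrder A] [StarOrderedRing A]

lemma apply_nonneg_of_mem_topologicalClosure (C : StarSubalgebra ℂ A) {F : A →L[ℂ] ℂ}
    (hF : ∀ c ∈ C, 0 ≤ F (star c * c)) {x : A} (hx : x ∈ C.topologicalClosure) (hx₀ : 0 ≤ x) :
    0 ≤ F x := by
  have hclosed : IsClosed {d : A | 0 ≤ F (star d * d)} :=
    isClosed_le continuous_const (F.continuous.comp (continuous_star.mul continuous_id))
  have hsqrt : CFC.sqrt x ∈ C.topologicalClosure := by
    rw [CFC.sqrt_eq_real_sqrt x]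
    exact cfcₙ_mem (𝕜 := ℝ) (𝕜' := ℂ) (hs := C.isClosed_topologicalClosure) _ hx
  have h : CFC.sqrt x ∈ {d : A | 0 ≤ F (star d * d)} := closure_minimal hF hclosed hsqrt
  rwa [Set.mem_ofPred_eq, (CFC.sqrt_nonneg x).star_eq, CFC.sqrt_mul_sqrt_self x] at h

lemma re_apply_realPart_of_nonneg (D : StarSubalgebra ℂ A) {F : A →ₗ[ℂ] ℂ}
    (hF : ∀ x ∈ D, 0 ≤ x → 0 ≤ F x) {x : A} (hx : x ∈ D) : (F (ℜ x)).re = (F x).re := by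
  have hstar : F (star x) = conj (F x) :=
    map_star_of_nonneg (g := F.comp (inclL D))
      (fun d => hF _ (mul_mem (star_mem d.2) d.2) (star_mul_self_nonneg _)) ⟨x, hx⟩
  rw [realPart_apply_coe, LinearMap.map_smul_of_tower, map_add, hstar, add_conj]
  simp

/-- M. Riesz extension from the real subspace `{x | ℜ x ∈ D}`, which meets `-y + A₊` for every `y`
in `‖ℜ y‖ • 1 - y + ℜ y`. -/
lemma exists_nonneg_extension_re_apply_realPart (D : StarSubalgebra ℂ A) (F : A →ₗ[ℂ] ℂ)
    (hF : ∀ x ∈ D, 0 ≤ x → 0 ≤ F x) :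
    ∃ L : A →ₗ[ℝ] ℝ, (∀ x, (ℜ x : A) ∈ D → L x = (F (ℜ x)).re) ∧ ∀ x, 0 ≤ x → 0 ≤ L x := by
  let ρ : A →ₗ[ℝ] A := (selfAdjoint.submodule ℝ A).subtype ∘ₗ realPart
  let p : Submodule ℝ A := (D.toSubalgebra.toSubmodule.restrictScalars ℝ).comap ρ
  let f₀ : p →ₗ[ℝ] ℝ := (reLm ∘ₗ F.restrictScalars ℝ ∘ₗ ρ).domRestrict p
  have nonneg : ∀ x : p, (x : A) ∈ PointedCone.positive ℝ A → 0 ≤ f₀ x := by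
    rintro ⟨x, hx : ρ x ∈ D⟩ (hx₀ : 0 ≤ x)
    have hρ : ρ x = x := (IsSelfAdjoint.of_nonneg hx₀).coe_realPart
    change 0 ≤ (F (ρ x)).re
    rw [hρ] at hx ⊢
    exact (nonneg_iff.mp (hF x hx hx₀)).1
  have dense : ∀ y : A, ∃ x : p, (x : A) + y ∈ PointedCone.positive ℝ A := by
    intro y
    set r : A := algebraMap ℝ A ‖(ℜ y : A)‖
    have hr : ρ r = r := (IsSelfAdjoint.algebraMap A (.all _)).coe_realPart
    have hrD : r ∈ D := by simp [r, IsScalarTower.algebraMap_apply ℝ ℂ A]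
    have hρρ : ρ (ℜ y) = ρ y := congrArg Subtype.val realPart_idem
    refine ⟨⟨r - y + ℜ y, ?_⟩, ?_⟩
    · change ρ (r - y + ℜ y) ∈ D
      rwa [map_add, map_sub, hr, hρρ, sub_add_cancel]
    · change 0 ≤ r - y + ℜ y + y
      rw [show r - y + ℜ y + y = r + ℜ y by abel]
      exact neg_le_iff_add_nonneg'.mp (ℜ y).2.neg_algebraMap_norm_le_self
  obtain ⟨L, hLf₀, hLpos⟩ := riesz_extension (PointedCone.positive ℝ A) ⟨p, f₀⟩ nonneg dense
  exact ⟨L, fun x hx => hLf₀ ⟨x, hx⟩, hLpos⟩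

lemma exists_isState_eqOn_of_nonneg (D : StarSubalgebra ℂ A) (F : A →ₗ[ℂ] ℂ) (hF₁ : F 1 = 1)
    (hF : ∀ x ∈ D, 0 ≤ x → 0 ≤ F x) : ∃ h : A →ₗ[ℂ] ℂ, IsState h ∧ ∀ x ∈ D, h x = F x := by
  obtain ⟨L, hL, hLpos⟩ := exists_nonneg_extension_re_apply_realPart D F hF
  let h : A →ₗ[ℂ] ℂ := Module.Dual.extendRCLike L
  have hre (x : A) : (h x).re = L x := Module.Dual.re_extendRCLike_apply (𝕜 := ℂ) L x
  have hagree (x : A) (hx : x ∈ D) : h x = F x := by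
    refine eq_of_re_apply_eq (p := D.toSubalgebra.toSubmodule) (fun x (hx : x ∈ D) => ?_) hx
    rw [hre, hL x (D.realPart_mem hx), re_apply_realPart_of_nonneg D hF hx]
  refine ⟨h, ⟨(hagree 1 (one_mem D)).trans hF₁, fun a => nonneg_iff.mpr ⟨?_, ?_⟩⟩, hagree⟩
  · rw [hre]
    exact hLpos _ (star_mul_self_nonneg a)
  · have him : (ℜ (I • (star a * a)) : A) = 0 := by
      rw [realPart_I_smul, (IsSelfAdjoint.star_mul_self a).imaginaryPart, neg_zero,
        ZeroMemClass.coe_zero]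
    have := Module.Dual.im_extendRCLike_apply (𝕜 := ℂ) L (star a * a)
    simp only [RCLike.im_to_complex, RCLike.I_to_complex] at this
    rw [this, hL _ (by rw [him]; exact zero_mem D), him]
    simp

end Order

lemma IsState.exists_extension {C : StarSubalgebra ℂ A} {g : C →ₗ[ℂ] ℂ} (hg : IsState g) {K : ℝ}
    (hK : ∀ c : C, ‖g c‖ ≤ K * ‖(c : A)‖) : ∃ h : A →ₗ[ℂ] ℂ, IsState h ∧ ∀ c : C, h c = g c := by
  let _ := CStarAlgebra.spectralOrder A
  have _ := CStarAlgebra.spectralOrderedRing A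
  obtain ⟨F, hFg⟩ : ∃ F : A →L[ℂ] ℂ, ∀ c : C, F c = g c := by
    obtain ⟨F, hF, -⟩ := exists_extension_norm_eq (Subalgebra.toSubmodule C.toSubalgebra)
      (LinearMap.mkContinuous g K hK)
    exact ⟨F, hF⟩
  have hFpos (c : A) (hc : c ∈ C) : 0 ≤ F (star c * c) :=
    (hFg (star ⟨c, hc⟩ * ⟨c, hc⟩)).symm ▸ hg.2 _
  obtain ⟨h, hh, hhF⟩ := exists_isState_eqOn_of_nonneg C.topologicalClosure F
    ((hFg 1).trans hg.1) fun x hx hx₀ => apply_nonneg_of_mem_topologicalClosure C hFpos hx hx₀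
  exact ⟨h, hh, fun c => (hhF c (C.le_topologicalClosure c.2)).trans (hFg c)⟩

end CStarAlgebra

lemma eq_comp_inclL_of_eq_midpoint {B C : StarSubalgebra ℂ A} (hBC : B ≤ C)
    {f : A →ₗ[ℂ] ℂ} (hf : IsState f)
    (huniq : ∀ g : A →ₗ[ℂ] ℂ, IsState g → g.comp (inclL B) = f.comp (inclL B) → g = f)
    (hBpure : IsPureState (f.comp (inclL B))) {g₁ g₂ : C →ₗ[ℂ] ℂ} (hg₁ : IsState g₁)
    (hg₂ : IsState g₂) (hmid : f.comp (inclL C) = (2:ℂ)⁻¹ • g₁ + (2:ℂ)⁻¹ • g₂) :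
    g₁ = f.comp (inclL C) := by
  let _ : CStarAlgebra A := ⟨⟩
  have hmid' (c : C) : f c = 2⁻¹ * g₁ c + 2⁻¹ * g₂ c := LinearMap.congr_fun hmid c
  let ι := StarSubalgebra.inclusion hBC
  have hB : g₁.comp ι.toLinearMap = f.comp (inclL B) := by
    refine hBpure.eq_of_eq_midpoint (hg₁.comp_starAlgHom ι) (hg₂.comp_starAlgHom ι) ?_
    ext b
    exact hmid' (ι b)
  have hdom (c : C) : (g₁ (star c * c)).re ≤ 2 * (f (star (c : A) * c)).re := by
    have hsum : (f (star (c : A) * c)).re =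
        2⁻¹ * (g₁ (star c * c)).re + 2⁻¹ * (g₂ (star c * c)).re := by
      simpa using congrArg re (hmid' (star c * c))
    linarith [(nonneg_iff.mp (hg₂.2 c)).1]
  obtain ⟨h, hh, hhg₁⟩ := hg₁.exists_extension (hg₁.norm_apply_le_of_re_le hf zero_le_two hdom)
  have hhf : h = f := huniq h hh (by ext b; exact (hhg₁ (ι b)).trans (LinearMap.congr_fun hB b))
  ext c
  exact (hhg₁ c).symm.trans (congrArg (· (c : A)) hhf)

theorem restriction_pure_of_intermediate
    (B C : StarSubalgebra ℂ A) (hBC : B ≤ C)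
    (f : A →ₗ[ℂ] ℂ) (hf : IsState f)
    (huniq : ∀ g : A →ₗ[ℂ] ℂ, IsState g →
      g.comp (inclL B) = f.comp (inclL B) → g = f)
    (hBpure : IsPureState (f.comp (inclL B))) :
    IsPureState (f.comp (inclL C)) := by
  refine ⟨hf.comp_starAlgHom C.subtype, fun g₁ g₂ hg₁ hg₂ hmid => ?_⟩
  rw [eq_comp_inclL_of_eq_midpoint hBC hf huniq hBpure hg₁ hg₂ hmid,
    eq_comp_inclL_of_eq_midpoint hBC hf huniq hBpure hg₂ hg₁ (hmid.trans (add_comm _ _))]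
end
end
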